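/- Let q, p, u, w ∈ ℝ³ with u and w orthonormal, and set n = u × w. Let y(λ, μ) = q + λ u + μ w and suppose y(λ, μ) ≠ p. Define v(λ, μ) = (y(λ, μ) − p)/‖y(λ, μ) − p‖ and x(λ, μ, σ) = y(λ, μ) + σ v(λ, μ). Then the determinant of the Jacobian matrix of x with respect to the ordered variables (σ, λ, μ) equals (1 + σ/‖y(λ, μ) − p‖)² · [v(λ, μ) · n]. -/

import Mathlib

/-!
The columns of the Jacobian are `∂σ x = v`, `∂λ x = u + σ ∂λ v` and `∂μ x = w + σ ∂μ v`. The
derivative of the normalisation `z ↦ z / ‖z‖` at `z` is `‖z‖⁻¹` times the orthogonal projection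
onto `z⊥`, so with `r = ‖y − p‖` the last two columns are `(1 + σ/r) u` and `(1 + σ/r) w` up to
multiples of the first column `v`. These multiples do not change the determinant, which is
therefore the triple product `(1 + σ/r)² v · (u × w)`.
-/

open scoped RealInnerProductSpace

/-- The vector cross product on `EuclideanSpace ℝ (Fin 3)`. -/
noncomputable def cross3 (u v : EuclideanSpace ℝ (Fin 3)) : EuclideanSpace ℝ (Fin 3) :=
  (WithLp.equiv 2 (Fin 3 → ℝ)).symm
    (crossProduct ((WithLp.equiv 2 (Fin 3 → ℝ)) u) ((WithLp.equiv 2 (Fin 3 → ℝ)) v))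

open scoped Matrix

local notation "ℝ³" => EuclideanSpace ℝ (Fin 3)

lemma inner_cross3 (a b c : ℝ³) :
    ⟪a, cross3 b c⟫ = WithLp.ofLp a ⬝ᵥ (WithLp.ofLp b ⨯₃ WithLp.ofLp c) := by
  rw [EuclideanSpace.inner_eq_star_dotProduct, star_trivial, dotProduct_comm]; rfl

lemma inner_cross3_add_smul_add_smul (v u w : ℝ³) (a b c : ℝ) :
    ⟪v, cross3 (a • u + b • v) (a • w + c • v)⟫ = a ^ 2 * ⟪v, cross3 u w⟫ := by
  simp only [inner_cross3, WithLp.ofLp_add, WithLp.ofLp_smul, map_add, map_smul,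
    LinearMap.add_apply, LinearMap.smul_apply, cross_self, dotProduct_add, dotProduct_smul,
    dot_self_cross, dot_cross_self, dotProduct_zero, smul_eq_mul]
  ring

lemma LinearMap.det_eq_inner_cross3 (f : ℝ³ →ₗ[ℝ] ℝ³) :
    LinearMap.det f = ⟪f (EuclideanSpace.single 0 1),
      cross3 (f (EuclideanSpace.single 1 1)) (f (EuclideanSpace.single 2 1))⟫ := by
  rw [← LinearMap.det_toMatrix (EuclideanSpace.basisFun (Fin 3) ℝ).toBasis,
    ← Matrix.det_transpose, inner_cross3, triple_product_eq_det]
  congr 1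
  ext i j
  fin_cases i <;> simp [LinearMap.toMatrix_apply]

lemma LinearMap.det_eq_sq_mul_inner_cross3 {f : ℝ³ →ₗ[ℝ] ℝ³} {v u w : ℝ³} {a b c : ℝ}
    (h₀ : f (EuclideanSpace.single 0 1) = v)
    (h₁ : f (EuclideanSpace.single 1 1) = a • u + b • v)
    (h₂ : f (EuclideanSpace.single 2 1) = a • w + c • v) :
    LinearMap.det f = a ^ 2 * ⟪v, cross3 u w⟫ := by
  rw [det_eq_inner_cross3, h₀, h₁, h₂, inner_cross3_add_smul_add_smul]

section Normalization

variable {F : Type*} [NormedAddCommGroup F] [InnerProductSpace ℝ F]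

theorem hasFDerivAt_norm {x : F} (hx : x ≠ 0) :
    HasFDerivAt (‖·‖) (‖x‖⁻¹ • innerSL ℝ x) x := by
  have h := (hasStrictFDerivAt_norm_sq x).hasFDerivAt.sqrt (by positivity)
  simp only [Real.sqrt_sq (norm_nonneg _)] at h
  convert h using 1
  ext y
  simp only [smul_apply, coe_innerSL_apply, smul_eq_mul, one_div, mul_inv_rev, nsmul_eq_mul,
    Nat.cast_ofNat]
  field_simp

theorem hasFDerivAt_norm_inv_smul_self {x : F} (hx : x ≠ 0) :
    HasFDerivAt (fun y : F => ‖y‖⁻¹ • y)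
      (‖x‖⁻¹ • (ContinuousLinearMap.id ℝ F -
        (innerSL ℝ (‖x‖⁻¹ • x)).smulRight (‖x‖⁻¹ • x))) x := by
  have h : HasFDerivAt (fun y : F => ‖y‖⁻¹ • y) _ x :=
    ((hasDerivAt_inv (norm_ne_zero_iff.2 hx)).comp_hasFDerivAt x (hasFDerivAt_norm hx)).smul
      (hasFDerivAt_id x)
  convert h using 1
  ext y
  simp only [map_smul, smul_sub, sub_apply, smul_apply, ContinuousLinearMap.id_apply,
    ContinuousLinearMap.smulRight_apply, coe_innerSL_apply, smul_eq_mul, smul_smul,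
    Function.comp_apply, neg_mul, neg_smul, add_apply, neg_apply]
  module

end Normalization

theorem det_jacobian_sliver_param_orthonormal_general
    (q₀ p u w : EuclideanSpace ℝ (Fin 3))
    (n : EuclideanSpace ℝ (Fin 3)) (hn : n = cross3 u w)
    (y : ℝ → ℝ → EuclideanSpace ℝ (Fin 3))
    (hy : ∀ lam mu : ℝ, y lam mu = q₀ + lam • u + mu • w)
    (v : ℝ → ℝ → EuclideanSpace ℝ (Fin 3))
    (hv : ∀ lam mu : ℝ, v lam mu = ‖y lam mu - p‖⁻¹ • (y lam mu - p))
    (x : EuclideanSpace ℝ (Fin 3) → EuclideanSpace ℝ (Fin 3))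
    (hx : ∀ q : EuclideanSpace ℝ (Fin 3), x q = y (q 1) (q 2) + q 0 • v (q 1) (q 2)) :
    ∀ q : EuclideanSpace ℝ (Fin 3), y (q 1) (q 2) ≠ p →
      LinearMap.det (fderiv ℝ x q :
          EuclideanSpace ℝ (Fin 3) →ₗ[ℝ] EuclideanSpace ℝ (Fin 3)) =
        (1 + q 0 / ‖y (q 1) (q 2) - p‖) ^ 2 * ⟪v (q 1) (q 2), n⟫ := by
  intro q hq
  let π (i : Fin 3) : ℝ³ →L[ℝ] ℝ := EuclideanSpace.proj i
  set L : ℝ³ →L[ℝ] ℝ³ := (π 1).smulRight u + (π 2).smulRight w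
  set r := ‖y (q 1) (q 2) - p‖
  set v₀ := v (q 1) (q 2)
  set P : ℝ³ →L[ℝ] ℝ³ := r⁻¹ • (ContinuousLinearMap.id ℝ ℝ³ - (innerSL ℝ v₀).smulRight v₀)
  have hy' : HasFDerivAt (fun q : ℝ³ => y (q 1) (q 2) - p) L q := by
    simp_rw [hy, add_assoc]
    exact ((((π 1).hasFDerivAt.smul_const u).add ((π 2).hasFDerivAt.smul_const w)).const_add
      q₀).sub_const p
  have hv' : HasFDerivAt (fun q : ℝ³ => v (q 1) (q 2)) (P.comp L) q := by
    simpa only [Function.comp_def, ← hv] using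
      (hasFDerivAt_norm_inv_smul_self (sub_ne_zero.2 hq)).comp q hy'
  have hx' : HasFDerivAt x (L + (q 0 • P.comp L + (π 0).smulRight v₀)) q := by
    rw [show x = fun q => p + (y (q 1) (q 2) - p) + q 0 • v (q 1) (q 2) from
      funext fun q => by rw [hx]; abel]
    exact (hy'.const_add p).add ((π 0).hasFDerivAt.smul hv')
  rw [hx'.fderiv, hn]
  apply LinearMap.det_eq_sq_mul_inner_cross3 (b := -(q 0 / r) * ⟪v₀, u⟫)
    (c := -(q 0 / r) * ⟪v₀, w⟫)
  all_goals
    simp only [L, P, π, ContinuousLinearMap.coe_coe, add_apply, smul_apply, sub_apply,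
      ContinuousLinearMap.comp_apply, ContinuousLinearMap.id_apply,
      ContinuousLinearMap.smulRight_apply, innerSL_apply_apply, PiLp.proj_apply,
      PiLp.single_apply]
    simp only [Fin.reduceEq, if_true, if_false, zero_smul, one_smul, add_zero, zero_add,
      inner_zero_right]
    module

/-- **Jacobian determinant of the sliver parameterization (orthonormal plane coordinates).**
With `y(λ, μ) = q₀ + λ u + μ w` for orthonormal `u, w`, `n = u × w`,
`v(λ, μ) = (y(λ, μ) − p)/‖y(λ, μ) − p‖` and `x(σ, λ, μ) = y(λ, μ) + σ v(λ, μ)`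
(a point `q` encodes `(σ, λ, μ) = (q 0, q 1, q 2)`), the Jacobian determinant of `x` with
respect to `(σ, λ, μ)` equals `(1 + σ/‖y(λ, μ) − p‖)² · [v(λ, μ) · n]` wherever
`y(λ, μ) ≠ p`. -/
theorem det_jacobian_sliver_param_orthonormal
    (q₀ p u w : EuclideanSpace ℝ (Fin 3))
    (hu : ‖u‖ = 1) (hw : ‖w‖ = 1) (huw : ⟪u, w⟫ = 0)
    (n : EuclideanSpace ℝ (Fin 3)) (hn : n = cross3 u w)
    (y : ℝ → ℝ → EuclideanSpace ℝ (Fin 3))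
    (hy : ∀ lam mu : ℝ, y lam mu = q₀ + lam • u + mu • w)
    (v : ℝ → ℝ → EuclideanSpace ℝ (Fin 3))
    (hv : ∀ lam mu : ℝ, v lam mu = ‖y lam mu - p‖⁻¹ • (y lam mu - p))
    (x : EuclideanSpace ℝ (Fin 3) → EuclideanSpace ℝ (Fin 3))
    (hx : ∀ q : EuclideanSpace ℝ (Fin 3), x q = y (q 1) (q 2) + q 0 • v (q 1) (q 2)) :
    ∀ q : EuclideanSpace ℝ (Fin 3), y (q 1) (q 2) ≠ p →
      LinearMap.det (fderiv ℝ x q :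
          EuclideanSpace ℝ (Fin 3) →ₗ[ℝ] EuclideanSpace ℝ (Fin 3)) =
        (1 + q 0 / ‖y (q 1) (q 2) - p‖) ^ 2 * ⟪v (q 1) (q 2), n⟫ :=
  det_jacobian_sliver_param_orthonormal_general q₀ p u w n hn y hy v hv x hx
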